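/- arXiv:2003.00262 — 2 statements merged into one kernel-verified Lean document; each statement's English description precedes it below -/
import Mathlib

section
/- Lemma 1 (restriction to blocklengths that are integer multiples of r). Let S : ℕ → Ω → ℝ be a source with square-integrable coordinates and uniformly bounded variances, i.e., there exists C < ∞ with E[(S i)²] ≤ C for all i ∈ ℕ. Fix an integer r ≥ 1. Then a pair (R, D) of nonnegative reals is achievable for S if and only if it is r-block achievable for S. (In particular, the infimum of achievable rates at maximal distortion D is unchanged when only source codes whose blocklength is an integer multiple of r are allowed.) -/
open MeasureTheory Filter

/-- Rate of an `(l, M)` source code, in bits per source sample. -/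
noncomputable def codeRate (l M : ℕ) : ℝ := Real.logb 2 M / l

/-- Average MSE distortion of an `(l, M)` source code `(f, g)` applied to the source `S`. -/
noncomputable def codeDistortion {Ω : Type*} [MeasurableSpace Ω] (P : Measure Ω)
    (S : ℕ → Ω → ℝ) {l M : ℕ} (f : (Fin l → ℝ) → Fin M) (g : Fin M → Fin l → ℝ) : ℝ :=
  (1 / (l : ℝ)) * ∑ i : Fin l, ∫ ω, (S (i : ℕ) ω - g (f (fun j : Fin l => S (j : ℕ) ω)) i) ^ 2 ∂P

/-- A rate-distortion pair `(R, D)` is achievable for the source `S` if for every `η > 0`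
there is a blocklength `l₀` such that for every `l ≥ l₀` (with `l ≥ 1`) there exists an
`(l, M)` source code (measurable encoder `f`, decoder `g`, `M ≥ 1`) whose rate is at most
`R + η` and whose average MSE distortion on `S` is at most `D + η`. -/
def Achievable {Ω : Type*} [MeasurableSpace Ω] (P : Measure Ω)
    (S : ℕ → Ω → ℝ) (R D : ℝ) : Prop :=
  ∀ η : ℝ, 0 < η → ∃ l₀ : ℕ, ∀ l : ℕ, l₀ ≤ l → 1 ≤ l →
    ∃ (M : ℕ) (f : (Fin l → ℝ) → Fin M) (g : Fin M → Fin l → ℝ),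
      1 ≤ M ∧ Measurable f ∧
      codeRate l M ≤ R + η ∧ codeDistortion P S f g ≤ D + η

/-- `(R, D)` is `r`-block achievable for `S` if for every `η > 0` there is `b₀` such that for
every `b ≥ b₀` there exists a `(b·r, M)` source code with rate at most `R + η` and average MSE
distortion on `S` at most `D + η`. -/
def RBlockAchievable {Ω : Type*} [MeasurableSpace Ω] (P : Measure Ω)
    (S : ℕ → Ω → ℝ) (R D : ℝ) (r : ℕ) : Prop :=
  ∀ η : ℝ, 0 < η → ∃ b₀ : ℕ, ∀ b : ℕ, b₀ ≤ b → 1 ≤ b →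
    ∃ (M : ℕ) (f : (Fin (b * r) → ℝ) → Fin M) (g : Fin M → Fin (b * r) → ℝ),
      1 ≤ M ∧ Measurable f ∧
      codeRate (b * r) M ≤ R + η ∧ codeDistortion P S f g ≤ D + η

/-!
A code of blocklength `k ≤ l` extends to blocklength `l` by encoding only the first `k`
samples and reconstructing the remaining `l - k` samples as `0`. The rate only drops, and the
padded samples add at most `(l - k) C / l` to the distortion. Every `l ≥ r` lies within `r` of
the multiple `⌊l / r⌋ r`, so this excess vanishes as `l → ∞`; conversely multiples of `r` are
themselves blocklengths.
-/

section Padding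

variable {Ω : Type*} [MeasurableSpace Ω] {P : Measure Ω} {S : ℕ → Ω → ℝ} {k l M : ℕ}

theorem codeRate_le_codeRate_of_le (hM : 1 ≤ M) (hk : 0 < k) (hkl : k ≤ l) :
    codeRate l M ≤ codeRate k M :=
  div_le_div_of_nonneg_left (Real.logb_nonneg one_lt_two (by exact_mod_cast hM))
    (by exact_mod_cast hk) (by exact_mod_cast hkl)

theorem natCast_mul_codeDistortion (f : (Fin l → ℝ) → Fin M) (g : Fin M → Fin l → ℝ) :
    (l : ℝ) * codeDistortion P S f g =
      ∑ i : Fin l, ∫ ω, (S i ω - g (f fun j : Fin l => S j ω) i) ^ 2 ∂P := by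
  rcases Nat.eq_zero_or_pos l with rfl | hl
  · simp
  · rw [codeDistortion, ← mul_assoc, mul_one_div_cancel (by positivity), one_mul]

def truncEncoder (hkl : k ≤ l) (f : (Fin k → ℝ) → Fin M) : (Fin l → ℝ) → Fin M :=
  fun x => f fun j => x (Fin.castLE hkl j)

def padDecoder (g : Fin M → Fin k → ℝ) : Fin M → Fin l → ℝ :=
  fun m i => if h : (i : ℕ) < k then g m ⟨i, h⟩ else 0

theorem measurable_truncEncoder (hkl : k ≤ l) {f : (Fin k → ℝ) → Fin M} (hf : Measurable f) :
    Measurable (truncEncoder hkl f) :=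
  hf.comp (measurable_pi_lambda _ fun _ => measurable_pi_apply _)

theorem natCast_mul_codeDistortion_pad (hkl : k ≤ l) (f : (Fin k → ℝ) → Fin M)
    (g : Fin M → Fin k → ℝ) :
    (l : ℝ) * codeDistortion P S (truncEncoder hkl f) (padDecoder g) =
      k * codeDistortion P S f g + ∑ i ∈ Finset.Ico k l, ∫ ω, S i ω ^ 2 ∂P := by
  set F : ℕ → ℝ := fun n => ∫ ω, (S n ω - if h : n < k then
    g (f fun j : Fin k => S j ω) ⟨n, h⟩ else 0) ^ 2 ∂P
  have hF_lt : ∀ i : Fin k, F i = ∫ ω, (S i ω - g (f fun j : Fin k => S j ω) i) ^ 2 ∂P :=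
    fun i => by simp only [F, dif_pos i.isLt, Fin.eta]
  have hF_ge : ∀ i ∈ Finset.Ico k l, F i = ∫ ω, S i ω ^ 2 ∂P := fun i hi => by
    simp only [F, dif_neg (Finset.mem_Ico.1 hi).1.not_gt, sub_zero]
  calc (l : ℝ) * codeDistortion P S (truncEncoder hkl f) (padDecoder g)
      = ∑ i ∈ Finset.range l, F i := by
        rw [natCast_mul_codeDistortion, ← Fin.sum_univ_eq_sum_range F l]; rfl
    _ = ∑ i : Fin k, F i + ∑ i ∈ Finset.Ico k l, F i := by
        rw [← Finset.sum_range_add_sum_Ico F hkl, Fin.sum_univ_eq_sum_range]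
    _ = k * codeDistortion P S f g + ∑ i ∈ Finset.Ico k l, ∫ ω, S i ω ^ 2 ∂P := by
        rw [natCast_mul_codeDistortion, Finset.sum_congr rfl fun i _ => hF_lt i,
          Finset.sum_congr rfl hF_ge]

theorem codeDistortion_pad_le {C D : ℝ} (hC : ∀ i, ∫ ω, S i ω ^ 2 ∂P ≤ C) (hD : 0 ≤ D)
    (hl : 0 < l) (hkl : k ≤ l) {f : (Fin k → ℝ) → Fin M} {g : Fin M → Fin k → ℝ}
    (hfg : codeDistortion P S f g ≤ D) :
    codeDistortion P S (truncEncoder hkl f) (padDecoder g) ≤ D + (l - k : ℕ) * C / l := by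
  have hl' : (0 : ℝ) < l := by exact_mod_cast hl
  have htail : ∑ i ∈ Finset.Ico k l, ∫ ω, S i ω ^ 2 ∂P ≤ (l - k : ℕ) * C := by
    simpa using Finset.sum_le_card_nsmul (Finset.Ico k l) _ C fun i _ => hC i
  have hk : (k : ℝ) * codeDistortion P S f g ≤ l * D :=
    calc (k : ℝ) * codeDistortion P S f g ≤ k * D := by gcongr
      _ ≤ l * D := by gcongr
  rw [← mul_le_mul_iff_of_pos_left hl', natCast_mul_codeDistortion_pad, mul_add,
    mul_div_cancel₀ _ hl'.ne']
  linarith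

end Padding

section Achievability

variable {Ω : Type*} [MeasurableSpace Ω] {P : Measure Ω} {S : ℕ → Ω → ℝ} {R D : ℝ} {r : ℕ}

theorem Achievable.rBlockAchievable (hr : 1 ≤ r) (h : Achievable P S R D) :
    RBlockAchievable P S R D r := by
  intro η hη
  obtain ⟨l₀, hl₀⟩ := h η hη
  have hb : ∀ b, b ≤ b * r := fun b => Nat.le_mul_of_pos_right b hr
  exact ⟨l₀, fun b hb₀ hb₁ => hl₀ (b * r) (hb₀.trans (hb b)) (hb₁.trans (hb b))⟩

theorem RBlockAchievable.achievable {C : ℝ} (hC : ∀ i, ∫ ω, S i ω ^ 2 ∂P ≤ C) (hr : 1 ≤ r)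
    (hD : 0 ≤ D) (h : RBlockAchievable P S R D r) : Achievable P S R D := by
  intro η hη
  obtain ⟨b₀, hb₀⟩ := h (η / 2) (half_pos hη)
  obtain ⟨N, hN⟩ := exists_nat_gt (2 * r * C / η)
  refine ⟨max ((b₀ + 1) * r) N, fun l hl _ => ?_⟩
  have hC0 : 0 ≤ C := (integral_nonneg fun _ => sq_nonneg _).trans (hC 0)
  have hdivmod := Nat.div_add_mod' l r
  have hmod := Nat.mod_lt l hr
  set b := l / r
  have hbr : b * r ≤ l := Nat.div_mul_le_self l r
  have hb : b₀ + 1 ≤ b := (Nat.le_div_iff_mul_le hr).2 (le_of_max_le_left hl)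
  have hrem : l - b * r ≤ r := by omega
  have hbr_pos : 0 < b * r := Nat.mul_pos (by omega) hr
  have hl_pos : 0 < l := hbr_pos.trans_le hbr
  have hexcess : ((l - b * r : ℕ) : ℝ) * C / l ≤ η / 2 := by
    have hl' : (0 : ℝ) < l := by exact_mod_cast hl_pos
    have hN_le : 2 * r * C < η * l :=
      (div_lt_iff₀' hη).1 (hN.trans_le (by exact_mod_cast le_of_max_le_right hl))
    calc ((l - b * r : ℕ) : ℝ) * C / l ≤ r * C / l := by gcongr
      _ ≤ η / 2 := by rw [div_le_iff₀ hl']; linarith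
  obtain ⟨M, f, g, hM, hf, hrate, hdist⟩ := hb₀ b (by omega) (by omega)
  refine ⟨M, truncEncoder hbr f, padDecoder g, hM, measurable_truncEncoder hbr hf, ?_, ?_⟩
  · exact (codeRate_le_codeRate_of_le hM hbr_pos hbr).trans (by linarith)
  · exact (codeDistortion_pad_le hC (by linarith) hl_pos hbr hdist).trans (by linarith)

end Achievability

theorem achievable_iff_rBlockAchievable_general {Ω : Type*} [MeasurableSpace Ω] (P : Measure Ω)
    (S : ℕ → Ω → ℝ)
    (C : ℝ) (hC : ∀ i, ∫ ω, (S i ω) ^ 2 ∂P ≤ C)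
    (r : ℕ) (hr : 1 ≤ r)
    (R D : ℝ) (hD : 0 ≤ D) :
    Achievable P S R D ↔ RBlockAchievable P S R D r :=
  ⟨Achievable.rBlockAchievable hr, RBlockAchievable.achievable hC hr hD⟩

/-- **Lemma 1 (restriction to blocklengths that are integer multiples of `r`).**
For a source with square-integrable coordinates and uniformly bounded second moments,
a rate-distortion pair `(R, D)` is achievable if and only if it is `r`-block achievable. -/
theorem achievable_iff_rBlockAchievable {Ω : Type*} [MeasurableSpace Ω] (P : Measure Ω)
    [IsProbabilityMeasure P] (S : ℕ → Ω → ℝ)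
    (hmeas : ∀ i, Measurable (S i)) (hL2 : ∀ i, MemLp (S i) 2 P)
    (C : ℝ) (hC : ∀ i, ∫ ω, (S i ω) ^ 2 ∂P ≤ C)
    (r : ℕ) (hr : 1 ≤ r)
    (R D : ℝ) (hR : 0 ≤ R) (hD : 0 ≤ D) :
    Achievable P S R D ↔ RBlockAchievable P S R D r :=
  achievable_iff_rBlockAchievable_general P S C hC r hr R D hD
end

section
/- Convergence of step-function thresholds (intermediate claim in the proof of Lemma C.2). Let (ζ_n)_{n∈ℕ} be a bounded sequence of real numbers and, for each n, define the step function G_n : ℝ → ℝ by G_n(β) = 1 if β ≥ ζ_n and G_n(β) = 0 otherwise. If for every β ∈ ℝ the limit lim_{n→∞} G_n(β) exists, then the sequence (ζ_n) converges to some ζ* ∈ ℝ; moreover lim_{n→∞} G_n(β) = 1 for every β > ζ*, lim_{n→∞} G_n(β) = 0 for every β < ζ*, and sInf {β ∈ ℝ : lim_{n→∞} G_n(β) = 1} = ζ*. -/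
/-!
A `{0, 1}`-valued sequence converges only if it is eventually constant, so the convergence of
`G_n(β)` says that eventually `ζ_n ≤ β` or eventually `β < ζ_n`. For a bounded sequence this
dichotomy at every level `β` forces `ζ_n → limsup ζ_n = inf {β | eventually ζ_n ≤ β}`, and the
remaining claims are read off from this limit.
-/

open Filter Topology

section IteOneZero

variable {ι : Type*} {l : Filter ι} {p : ι → Prop} [DecidablePred p]

lemma eventually_of_tendsto_ite_one_zero {L : ℝ}
    (h : Tendsto (fun i => if p i then (1 : ℝ) else 0) l (𝓝 L)) (hL : 0 < L) :
    ∀ᶠ i in l, p i := by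
  filter_upwards [h.eventually (lt_mem_nhds hL)] with i hi
  by_contra hp
  simp [hp] at hi

lemma eventually_not_of_tendsto_ite_one_zero {L : ℝ}
    (h : Tendsto (fun i => if p i then (1 : ℝ) else 0) l (𝓝 L)) (hL : L < 1) :
    ∀ᶠ i in l, ¬p i := by
  filter_upwards [h.eventually (gt_mem_nhds hL)] with i hi hp
  simp [hp] at hi

lemma eventually_or_eventually_not_of_tendsto_ite_one_zero {L : ℝ}
    (h : Tendsto (fun i => if p i then (1 : ℝ) else 0) l (𝓝 L)) :
    (∀ᶠ i in l, p i) ∨ ∀ᶠ i in l, ¬p i := by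
  rcases lt_or_ge 0 L with hL | hL
  · exact .inl (eventually_of_tendsto_ite_one_zero h hL)
  · exact .inr (eventually_not_of_tendsto_ite_one_zero h (hL.trans_lt one_pos))

lemma tendsto_ite_one_zero_nhds_one_iff :
    Tendsto (fun i => if p i then (1 : ℝ) else 0) l (𝓝 1) ↔ ∀ᶠ i in l, p i :=
  ⟨fun h => eventually_of_tendsto_ite_one_zero h one_pos,
    fun h => tendsto_const_nhds.congr' (h.mono fun _ hi => (if_pos hi).symm)⟩

lemma tendsto_ite_one_zero_nhds_zero (h : ∀ᶠ i in l, ¬p i) :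
    Tendsto (fun i => if p i then (1 : ℝ) else 0) l (𝓝 0) :=
  tendsto_const_nhds.congr' (h.mono fun _ hi => (if_neg hi).symm)

end IteOneZero

theorem tendsto_limsup_of_forall_eventually_le_or_eventually_lt {ι α : Type*}
    [ConditionallyCompleteLinearOrder α] [TopologicalSpace α] [OrderTopology α]
    {l : Filter ι} [l.NeBot] {u : ι → α}
    (hle : IsBoundedUnder (· ≤ ·) l u) (hge : IsBoundedUnder (· ≥ ·) l u)
    (h : ∀ b, (∀ᶠ i in l, u i ≤ b) ∨ ∀ᶠ i in l, b < u i) :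
    Tendsto u l (𝓝 (limsup u l)) :=
  tendsto_order.2
    ⟨fun b hb => (h b).resolve_left fun hub =>
        (limsup_le_of_le hge.isCoboundedUnder_le hub).not_gt hb,
      fun _ hb => eventually_lt_of_limsup_lt hb hle⟩

/-- **Convergence of step-function thresholds (intermediate claim in the proof of Lemma C.2).**
Let `(ζ_n)` be a bounded real sequence and `G_n(β) = 1` if `β ≥ ζ_n`, `G_n(β) = 0` otherwise.
If `G_n(β)` converges for every `β`, then `ζ_n` converges to some `ζ*`, the limit of `G_n(β)`
is `1` for `β > ζ*` and `0` for `β < ζ*`, and `sInf {β | lim_n G_n(β) = 1} = ζ*`. -/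
theorem step_function_threshold_convergence (ζ : ℕ → ℝ)
    (hbd : ∃ C : ℝ, ∀ n, |ζ n| ≤ C)
    (hconv : ∀ β : ℝ, ∃ L : ℝ,
      Tendsto (fun n => if ζ n ≤ β then (1 : ℝ) else 0) atTop (𝓝 L)) :
    ∃ ζstar : ℝ, Tendsto ζ atTop (𝓝 ζstar) ∧
      (∀ β : ℝ, ζstar < β →
        Tendsto (fun n => if ζ n ≤ β then (1 : ℝ) else 0) atTop (𝓝 1)) ∧
      (∀ β : ℝ, β < ζstar →
        Tendsto (fun n => if ζ n ≤ β then (1 : ℝ) else 0) atTop (𝓝 0)) ∧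
      sInf {β : ℝ |
        Tendsto (fun n => if ζ n ≤ β then (1 : ℝ) else 0) atTop (𝓝 1)} = ζstar := by
  obtain ⟨hle, hge⟩ := isBoundedUnder_le_abs.1 (isBoundedUnder_of (f := atTop) hbd)
  have hdich (β : ℝ) : (∀ᶠ n in atTop, ζ n ≤ β) ∨ ∀ᶠ n in atTop, β < ζ n := by
    obtain ⟨L, hL⟩ := hconv β
    exact (eventually_or_eventually_not_of_tendsto_ite_one_zero hL).imp_right
      (Eventually.mono · fun _ => lt_of_not_ge)
  have hlim := tendsto_limsup_of_forall_eventually_le_or_eventually_lt hle hge hdich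
  refine ⟨limsup ζ atTop, hlim, fun β hβ => ?_, fun β hβ => ?_, ?_⟩
  · exact tendsto_ite_one_zero_nhds_one_iff.2 <|
      (hlim.eventually (gt_mem_nhds hβ)).mono fun _ => le_of_lt
  · exact tendsto_ite_one_zero_nhds_zero <|
      (hlim.eventually (lt_mem_nhds hβ)).mono fun _ => not_le_of_gt
  · simp only [tendsto_ite_one_zero_nhds_one_iff, limsup_eq]
end
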